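/- arXiv:1407.3372 — 3 statements merged into one kernel-verified Lean document; each statement's English description precedes it below -/
import Mathlib

section
/- Suppose there exist a supermartingale consistent price system (Ŝ, Q) and a submartingale consistent price system (Š, Q) under the same equivalent probability measure Q. Define R̃_T = {(Ĥ·Ŝ)_T + (Ȟ·Š)_T : Ĥ ∈ 𝒫_T^+, Ȟ ∈ 𝒫_T^-}, where (H·S)_T = Σ_{j=1}^T H_j·(S_j − S_{j−1}). Then R̃_T ∩ L^0_+ = {0}, and the market satisfies no arbitrage, i.e. 𝒜_T ∩ L^0_+ = {0}. -/
open MeasureTheory Filter Finset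
open scoped ENNReal NNReal

noncomputable section

namespace BidAskFTAP

variable {Ω : Type*}

/-- Componentwise positive part of a vector in `ℝ^d`. -/
def posPart {d : ℕ} (x : Fin d → ℝ) : Fin d → ℝ := fun i => max (x i) 0

/-- Componentwise negative part of a vector in `ℝ^d`. -/
def negPart {d : ℕ} (x : Fin d → ℝ) : Fin d → ℝ := fun i => max (-(x i)) 0

/-- Inner product on `ℝ^d`. -/
def dotp {d : ℕ} (x y : Fin d → ℝ) : ℝ := ∑ i, x i * y i

section Market

variable [m : MeasurableSpace Ω] {d : ℕ}

/-- `F` is a filtration on `(Ω, m)` with horizon `T`: monotone, sub-σ-algebras of `m`,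
and `F T = m` (i.e. `𝓕_T = 𝓕`). -/
def IsFiltration (F : ℕ → MeasurableSpace Ω) (T : ℕ) : Prop :=
  Monotone F ∧ (∀ t, F t ≤ m) ∧ F T = m

/-- Adaptedness of an `ℝ^d`-valued process up to time `T`. -/
def AdaptedProc (F : ℕ → MeasurableSpace Ω) (T : ℕ) (S : ℕ → Ω → Fin d → ℝ) : Prop :=
  ∀ t ≤ T, Measurable[F t] (S t)

/-- Standing assumptions on the bid and ask price processes `S̲ = Sb`, `S̄ = Sa`:
adapted, strictly positive components, and `S̲ ≤ S̄` a.s. -/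
def IsBidAsk (P : Measure Ω) (F : ℕ → MeasurableSpace Ω) (T : ℕ)
    (Sb Sa : ℕ → Ω → Fin d → ℝ) : Prop :=
  AdaptedProc F T Sb ∧ AdaptedProc F T Sa ∧
  (∀ t ≤ T, ∀ i, ∀ᵐ ω ∂P, 0 < Sb t ω i) ∧
  (∀ t ≤ T, ∀ i, ∀ᵐ ω ∂P, 0 < Sa t ω i) ∧
  (∀ t ≤ T, ∀ i, ∀ᵐ ω ∂P, Sb t ω i ≤ Sa t ω i)

/-- A trading strategy on horizon `T`: predictable (`H t` is `𝓕_{t-1}`-measurable),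
with the convention `H 0 = 0` (so that `ΔH 1 = H 1`). -/
def IsStrategy (F : ℕ → MeasurableSpace Ω) (T : ℕ) (H : ℕ → Ω → Fin d → ℝ) : Prop :=
  H 0 = 0 ∧ ∀ t, 1 ≤ t → t ≤ T → Measurable[F (t - 1)] (H t)

/-- Membership in `𝒫_T^+`: componentwise nonnegative. -/
def NonnegStrategy (T : ℕ) (H : ℕ → Ω → Fin d → ℝ) : Prop :=
  ∀ t ≤ T, ∀ ω, ∀ i, 0 ≤ H t ω i

/-- Membership in `𝒫_T^-`: componentwise nonpositive. -/
def NonposStrategy (T : ℕ) (H : ℕ → Ω → Fin d → ℝ) : Prop :=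
  ∀ t ≤ T, ∀ ω, ∀ i, H t ω i ≤ 0

/-- Uniformly bounded strategy. -/
def BoundedStrategy (T : ℕ) (H : ℕ → Ω → Fin d → ℝ) : Prop :=
  ∃ C : ℝ, ∀ t ≤ T, ∀ ω, ∀ i, |H t ω i| ≤ C

/-- The immediate–liquidation value process
`x_T(H) = -∑_{j=1}^T (ΔH_j)⁺·S̄_{j-1} + ∑_{j=1}^T (ΔH_j)⁻·S̲_{j-1} + (H_T)⁺·S̲_T - (H_T)⁻·S̄_T`. -/
def xval (Sb Sa : ℕ → Ω → Fin d → ℝ) (T : ℕ) (H : ℕ → Ω → Fin d → ℝ) (ω : Ω) : ℝ :=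
  (∑ j ∈ Icc 1 T, (dotp (negPart (H j ω - H (j - 1) ω)) (Sb (j - 1) ω)
    - dotp (posPart (H j ω - H (j - 1) ω)) (Sa (j - 1) ω)))
  + dotp (posPart (H T ω)) (Sb T ω) - dotp (negPart (H T ω)) (Sa T ω)

/-- The gain `(H · S)_T = ∑_{j=1}^T H_j · (S_j - S_{j-1})`. -/
def gain (S : ℕ → Ω → Fin d → ℝ) (T : ℕ) (H : ℕ → Ω → Fin d → ℝ) (ω : Ω) : ℝ :=
  ∑ j ∈ Icc 1 T, dotp (H j ω) (S j ω - S (j - 1) ω)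

/-- Membership (as elements of `L⁰`, i.e. up to a.s. equality) in
`𝒜_t = ℛ_t - L⁰₊(𝓕_t)`. -/
def memA (P : Measure Ω) (F : ℕ → MeasurableSpace Ω) (Sb Sa : ℕ → Ω → Fin d → ℝ)
    (t : ℕ) (f : Ω → ℝ) : Prop :=
  ∃ H : ℕ → Ω → Fin d → ℝ, IsStrategy F t H ∧
    ∃ r : Ω → ℝ, Measurable[F t] r ∧ (∀ᵐ ω ∂P, 0 ≤ r ω) ∧
      f =ᵐ[P] fun ω => xval Sb Sa t H ω - r ω

/-- The no-arbitrage condition `𝒜_t ∩ L⁰₊(𝓕_t) = {0}` at horizon `t`. -/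
def NA (P : Measure Ω) (F : ℕ → MeasurableSpace Ω) (Sb Sa : ℕ → Ω → Fin d → ℝ)
    (t : ℕ) : Prop :=
  ∀ f : Ω → ℝ, memA P F Sb Sa t f → (∀ᵐ ω ∂P, 0 ≤ f ω) → f =ᵐ[P] 0

/-- Two measures are equivalent: mutually absolutely continuous. -/
def EquivMeasure (P Q : Measure Ω) : Prop := P ≪ Q ∧ Q ≪ P

/-- The Radon–Nikodym density `dQ/dP` belongs to `L^∞(P)`. -/
def BoundedDensity (P Q : Measure Ω) : Prop :=
  ∃ C : ℝ≥0, ∀ᵐ ω ∂P, Q.rnDeriv P ω ≤ (C : ℝ≥0∞)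

/-- `Q` is an equivalent bid-ask martingale measure (EBAMM) for `(S̲, S̄)`:
`Q ∼ P`, all `S̄_t` are `Q`-integrable, and for all `1 ≤ t ≤ T` and coordinates `i`:
`S̲_{t-1}^i ≤ E_Q[S̄_t^i | 𝓕_{t-1}]` and `E_Q[S̲_t^i | 𝓕_{t-1}] ≤ S̄_{t-1}^i` a.s. -/
def IsEBAMM (P : Measure Ω) (F : ℕ → MeasurableSpace Ω) (T : ℕ)
    (Sb Sa : ℕ → Ω → Fin d → ℝ) (Q : Measure Ω) : Prop :=
  IsProbabilityMeasure Q ∧ EquivMeasure P Q ∧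
  (∀ t ≤ T, ∀ i, Integrable (fun ω => Sa t ω i) Q) ∧
  (∀ t, 1 ≤ t → t ≤ T → ∀ i,
    (∀ᵐ ω ∂P, Sb (t - 1) ω i ≤ (Q[fun ω => Sa t ω i | F (t - 1)]) ω) ∧
    (∀ᵐ ω ∂P, (Q[fun ω => Sb t ω i | F (t - 1)]) ω ≤ Sa (t - 1) ω i))

/-- `(S̃, Q)` is a consistent price system: `Q ∼ P`, `S̃` adapted, evolving between bid and
ask prices, and a `Q`-martingale. -/
def IsCPS (P : Measure Ω) (F : ℕ → MeasurableSpace Ω) (T : ℕ)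
    (Sb Sa St : ℕ → Ω → Fin d → ℝ) (Q : Measure Ω) : Prop :=
  IsProbabilityMeasure Q ∧ EquivMeasure P Q ∧ AdaptedProc F T St ∧
  (∀ t ≤ T, ∀ i, Integrable (fun ω => St t ω i) Q) ∧
  (∀ t ≤ T, ∀ i, ∀ᵐ ω ∂P, Sb t ω i ≤ St t ω i ∧ St t ω i ≤ Sa t ω i) ∧
  (∀ t, 1 ≤ t → t ≤ T → ∀ i,
    Q[fun ω => St t ω i | F (t - 1)] =ᵐ[P] fun ω => St (t - 1) ω i)

/-- `(S̃, Q)` is a supermartingale consistent price system. -/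
def IsSupCPS (P : Measure Ω) (F : ℕ → MeasurableSpace Ω) (T : ℕ)
    (Sb Sa St : ℕ → Ω → Fin d → ℝ) (Q : Measure Ω) : Prop :=
  IsProbabilityMeasure Q ∧ EquivMeasure P Q ∧ AdaptedProc F T St ∧
  (∀ t ≤ T, ∀ i, Integrable (fun ω => St t ω i) Q) ∧
  (∀ t ≤ T, ∀ i, ∀ᵐ ω ∂P, Sb t ω i ≤ St t ω i ∧ St t ω i ≤ Sa t ω i) ∧
  (∀ t, 1 ≤ t → t ≤ T → ∀ i,
    (∀ᵐ ω ∂P, (Q[fun ω => St t ω i | F (t - 1)]) ω ≤ St (t - 1) ω i))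

/-- `(S̃, Q)` is a submartingale consistent price system. -/
def IsSubCPS (P : Measure Ω) (F : ℕ → MeasurableSpace Ω) (T : ℕ)
    (Sb Sa St : ℕ → Ω → Fin d → ℝ) (Q : Measure Ω) : Prop :=
  IsProbabilityMeasure Q ∧ EquivMeasure P Q ∧ AdaptedProc F T St ∧
  (∀ t ≤ T, ∀ i, Integrable (fun ω => St t ω i) Q) ∧
  (∀ t ≤ T, ∀ i, ∀ᵐ ω ∂P, Sb t ω i ≤ St t ω i ∧ St t ω i ≤ Sa t ω i) ∧
  (∀ t, 1 ≤ t → t ≤ T → ∀ i,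
    (∀ᵐ ω ∂P, St (t - 1) ω i ≤ (Q[fun ω => St t ω i | F (t - 1)]) ω))

/-- Membership (up to a.s. equality) in
`F_{t-1,t+k} = ℛ_{t-1,t+k}⁺ + ℛ_{t-1,t+k}⁻ - L⁰₊(𝓕_{t+k})`:
`f = Hp·(S̲_{t+k} - S̄_{t-1}) - Hm·(S̄_{t+k} - S̲_{t-1}) - r` with `Hp, Hm ≥ 0`
`𝓕_{t-1}`-measurable and `r ∈ L⁰₊(𝓕_{t+k})`. -/
def memFtk (P : Measure Ω) (F : ℕ → MeasurableSpace Ω) (Sb Sa : ℕ → Ω → Fin d → ℝ)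
    (t k : ℕ) (f : Ω → ℝ) : Prop :=
  ∃ (Hp Hm : Ω → Fin d → ℝ) (r : Ω → ℝ),
    Measurable[F (t - 1)] Hp ∧ Measurable[F (t - 1)] Hm ∧
    (∀ ω i, 0 ≤ Hp ω i) ∧ (∀ ω i, 0 ≤ Hm ω i) ∧
    Measurable[F (t + k)] r ∧ (∀ᵐ ω ∂P, 0 ≤ r ω) ∧
    f =ᵐ[P] fun ω =>
      dotp (Hp ω) (Sb (t + k) ω - Sa (t - 1) ω)
        - dotp (Hm ω) (Sa (t + k) ω - Sb (t - 1) ω) - r ω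

/-- Membership (up to a.s. equality) in
`F_t = ∑_{j<t} ℛ_{j,t}⁺ + ∑_{j<t} ℛ_{j,t}⁻ - L⁰₊(𝓕_t)`. -/
def memFt (P : Measure Ω) (F : ℕ → MeasurableSpace Ω) (Sb Sa : ℕ → Ω → Fin d → ℝ)
    (t : ℕ) (f : Ω → ℝ) : Prop :=
  ∃ (Hp Hm : ℕ → Ω → Fin d → ℝ) (r : Ω → ℝ),
    (∀ j < t, Measurable[F j] (Hp j) ∧ Measurable[F j] (Hm j)) ∧
    (∀ j < t, ∀ ω i, 0 ≤ Hp j ω i ∧ 0 ≤ Hm j ω i) ∧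
    Measurable[F t] r ∧ (∀ᵐ ω ∂P, 0 ≤ r ω) ∧
    f =ᵐ[P] fun ω =>
      (∑ j ∈ range t,
        (dotp (Hp j ω) (Sb t ω - Sa j ω) - dotp (Hm j ω) (Sa t ω - Sb j ω))) - r ω

/-- `x_{s,u}(H) = -H⁺·S̄_s + H⁻·S̲_s + H⁺·S̲_u - H⁻·S̄_u` for an `𝓕_s`-measurable `H`. -/
def xval2 (Sb Sa : ℕ → Ω → Fin d → ℝ) (s u : ℕ) (H : Ω → Fin d → ℝ) (ω : Ω) : ℝ :=
  - dotp (posPart (H ω)) (Sa s ω) + dotp (negPart (H ω)) (Sb s ω)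
    + dotp (posPart (H ω)) (Sb u ω) - dotp (negPart (H ω)) (Sa u ω)

/-- Membership (up to a.s. equality) in `𝒜_{t-1,t+k} = ℛ_{t-1,t+k} - L⁰₊(𝓕_{t+k})` where
`ℛ_{t-1,t+k} = {x_{t-1,t+k}(H) : H ∈ L⁰(ℝ^d, 𝓕_{t-1})}`. -/
def memA2 (P : Measure Ω) (F : ℕ → MeasurableSpace Ω) (Sb Sa : ℕ → Ω → Fin d → ℝ)
    (t k : ℕ) (f : Ω → ℝ) : Prop :=
  ∃ (H : Ω → Fin d → ℝ) (r : Ω → ℝ),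
    Measurable[F (t - 1)] H ∧ Measurable[F (t + k)] r ∧ (∀ᵐ ω ∂P, 0 ≤ r ω) ∧
    f =ᵐ[P] fun ω => xval2 Sb Sa (t - 1) (t + k) H ω - r ω

end Market

end BidAskFTAP

/-!
Under `Q`, the combined gains of a long position in the supermartingale `Ŝ` and a short position
in the submartingale `Š` form a generalized supermartingale started at `0`: on the
`𝓕_{t-1}`-measurable sets where the positions are bounded, each increment has nonpositive
conditional expectation. Such a process with nonnegative terminal value vanishes. For no
arbitrage, since `Ŝ` and `Š` lie between bid and ask, the liquidation value `x_T(H)` is dominated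
by the gains of `H⁺` in `Ŝ` plus those of `-H⁻` in `Š`.
-/

namespace BidAskFTAP

section CondExp

variable {Ω : Type*} {𝓖 m0 : MeasurableSpace Ω} {Q : Measure Ω}

def HasNonposCondExp (Q : Measure Ω) (𝓖 : MeasurableSpace Ω) (f : Ω → ℝ) : Prop :=
  Integrable f Q ∧ Q[f|𝓖] ≤ᵐ[Q] 0

theorem hasNonposCondExp_zero : HasNonposCondExp Q 𝓖 0 :=
  ⟨integrable_zero _ _ _, by rw [condExp_zero]⟩

theorem HasNonposCondExp.add {f g : Ω → ℝ} (hf : HasNonposCondExp Q 𝓖 f)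
    (hg : HasNonposCondExp Q 𝓖 g) : HasNonposCondExp Q 𝓖 (f + g) := by
  refine ⟨hf.1.add hg.1, ?_⟩
  filter_upwards [condExp_add hf.1 hg.1 𝓖, hf.2, hg.2] with ω h hfω hgω
  simp only [h, Pi.add_apply, Pi.zero_apply] at hfω hgω ⊢
  linarith

theorem HasNonposCondExp.sum {ι : Type*} (s : Finset ι) {f : ι → Ω → ℝ}
    (hf : ∀ i ∈ s, HasNonposCondExp Q 𝓖 (f i)) : HasNonposCondExp Q 𝓖 (∑ i ∈ s, f i) :=
  Finset.sum_induction f _ (fun _ _ => HasNonposCondExp.add) hasNonposCondExp_zero hf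

theorem HasNonposCondExp.indicator {f : Ω → ℝ} (h𝓖 : 𝓖 ≤ m0) (hf : HasNonposCondExp Q 𝓖 f)
    {s : Set Ω} (hs : MeasurableSet[𝓖] s) : HasNonposCondExp Q 𝓖 (s.indicator f) := by
  refine ⟨hf.1.indicator (h𝓖 _ hs), ?_⟩
  filter_upwards [condExp_indicator hf.1 hs, hf.2] with ω h hfω
  rw [h]
  by_cases hω : ω ∈ s
  · simpa [hω] using hfω
  · simp [hω]

theorem hasNonposCondExp_mul_sub [IsFiniteMeasure Q] (h𝓖 : 𝓖 ≤ m0) {h ξ η : Ω → ℝ} {C : ℝ}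
    (hh : Measurable[𝓖] h) (hh0 : 0 ≤ h) (hhC : ∀ ω, h ω ≤ C)
    (hξ : Integrable ξ Q) (hη : Integrable η Q) (hη𝓖 : Measurable[𝓖] η)
    (hξη : Q[ξ|𝓖] ≤ᵐ[Q] η) : HasNonposCondExp Q 𝓖 (h * (ξ - η)) := by
  have hint : Integrable (h * (ξ - η)) Q :=
    (hξ.sub hη).bdd_mul ((hh.mono h𝓖 le_rfl).aestronglyMeasurable)
      (ae_of_all _ fun ω => by simpa [abs_of_nonneg (hh0 ω)] using hhC ω)
  refine ⟨hint, ?_⟩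
  filter_upwards [condExp_mul_of_stronglyMeasurable_left hh.stronglyMeasurable hint (hξ.sub hη),
    condExp_sub hξ hη 𝓖, hξη] with ω hpull hsub hle
  rw [condExp_of_stronglyMeasurable h𝓖 hη𝓖.stronglyMeasurable hη] at hsub
  simp only [hpull, Pi.mul_apply, hsub, Pi.sub_apply, Pi.zero_apply]
  exact mul_nonpos_of_nonneg_of_nonpos (hh0 ω) (sub_nonpos.2 hle)

theorem HasNonposCondExp.nonneg_of_add_nonneg [IsFiniteMeasure Q] (h𝓖 : 𝓖 ≤ m0) {f Y : Ω → ℝ}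
    (hf : HasNonposCondExp Q 𝓖 f) (hY : Measurable[𝓖] Y) (hYi : Integrable Y Q)
    (hpos : 0 ≤ᵐ[Q] Y + f) : 0 ≤ᵐ[Q] Y := by
  have hmono : Q[-Y|𝓖] ≤ᵐ[Q] Q[f|𝓖] := condExp_mono hYi.neg hf.1 <| by
    filter_upwards [hpos] with ω h
    simp only [Pi.neg_apply, Pi.add_apply, Pi.zero_apply] at h ⊢
    linarith
  rw [condExp_of_stronglyMeasurable h𝓖 hY.stronglyMeasurable.neg hYi.neg] at hmono
  filter_upwards [hmono, hf.2] with ω h1 h2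
  simp only [Pi.neg_apply, Pi.zero_apply] at h1 h2 ⊢
  linarith

theorem HasNonposCondExp.ae_eq_zero_of_nonneg [IsFiniteMeasure Q] (h𝓖 : 𝓖 ≤ m0) {f : Ω → ℝ}
    (hf : HasNonposCondExp Q 𝓖 f) (hpos : 0 ≤ᵐ[Q] f) : f =ᵐ[Q] 0 := by
  have hle : ∫ ω, f ω ∂Q ≤ 0 := by
    rw [← integral_condExp h𝓖]
    exact integral_nonpos_of_ae hf.2
  exact (integral_eq_zero_iff_of_nonneg_ae hpos hf.1).1
    (le_antisymm hle (integral_nonneg_of_ae hpos))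

end CondExp

section LocalCondExp

variable {Ω : Type*} {𝓖 m0 : MeasurableSpace Ω} {Q : Measure Ω}

/-- `E_Q[f | 𝓖] ≤ 0` in the generalized sense. -/
def HasLocallyNonposCondExp (Q : Measure Ω) (𝓖 : MeasurableSpace Ω) (f : Ω → ℝ) : Prop :=
  ∃ B : ℕ → Set Ω, Monotone B ∧ (∀ n, MeasurableSet[𝓖] (B n)) ∧ (∀ ω, ∃ n, ω ∈ B n) ∧
    ∀ n, HasNonposCondExp Q 𝓖 ((B n).indicator f)

theorem ae_of_forall_ae_indicator {B : ℕ → Set Ω} (hB : ∀ ω, ∃ n, ω ∈ B n) {p : ℝ → Prop}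
    {f : Ω → ℝ} (h : ∀ n, ∀ᵐ ω ∂Q, p ((B n).indicator f ω)) : ∀ᵐ ω ∂Q, p (f ω) := by
  filter_upwards [ae_all_iff.2 h] with ω hω
  obtain ⟨n, hn⟩ := hB ω
  simpa [Set.indicator_of_mem hn] using hω n

theorem indicator_nonneg_ae {f : Ω → ℝ} (hf : 0 ≤ᵐ[Q] f) (s : Set Ω) :
    0 ≤ᵐ[Q] s.indicator f := by
  filter_upwards [hf] with ω h
  by_cases hω : ω ∈ s
  · simpa [hω] using h
  · simp [hω]

theorem HasLocallyNonposCondExp.add (h𝓖 : 𝓖 ≤ m0) {f g : Ω → ℝ}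
    (hf : HasLocallyNonposCondExp Q 𝓖 f) (hg : HasLocallyNonposCondExp Q 𝓖 g) :
    HasLocallyNonposCondExp Q 𝓖 (f + g) := by
  obtain ⟨B, hBmono, hBm, hBcov, hfB⟩ := hf
  obtain ⟨B', hB'mono, hB'm, hB'cov, hgB'⟩ := hg
  refine ⟨fun n => B n ∩ B' n, hBmono.inter hB'mono, fun n => (hBm n).inter (hB'm n),
    fun ω => ?_, fun n => ?_⟩
  · obtain ⟨n, hn⟩ := hBcov ω
    obtain ⟨n', hn'⟩ := hB'cov ω
    exact ⟨max n n', hBmono (le_max_left n n') hn, hB'mono (le_max_right n n') hn'⟩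
  · have hsplit : (B n ∩ B' n).indicator (f + g)
        = (B' n).indicator ((B n).indicator f) + (B n).indicator ((B' n).indicator g) := by
      rw [Set.indicator_add', Set.indicator_indicator, Set.indicator_indicator, Set.inter_comm]
    rw [hsplit]
    exact ((hfB n).indicator h𝓖 (hB'm n)).add ((hgB' n).indicator h𝓖 (hBm n))

theorem HasLocallyNonposCondExp.nonneg_of_add_nonneg [IsFiniteMeasure Q] (h𝓖 : 𝓖 ≤ m0)
    {f Y : Ω → ℝ} (hf : HasLocallyNonposCondExp Q 𝓖 f) (hY : Measurable[𝓖] Y)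
    (hpos : 0 ≤ᵐ[Q] Y + f) : 0 ≤ᵐ[Q] Y := by
  obtain ⟨B, hBmono, hBm, hBcov, hfB⟩ := hf
  -- shrink the cover so that `Y` is bounded, hence integrable, on each piece
  set A : ℕ → Set Ω := fun n => {ω | |Y ω| ≤ n} ∩ B n
  have hYle : ∀ n : ℕ, MeasurableSet[𝓖] {ω | |Y ω| ≤ n} := fun n =>
    (continuous_abs.measurable.comp hY) measurableSet_Iic
  have hAm : ∀ n, MeasurableSet[𝓖] (A n) := fun n => (hYle n).inter (hBm n)
  have hAcov : ∀ ω, ∃ n, ω ∈ A n := fun ω => by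
    obtain ⟨n, hn⟩ := hBcov ω
    obtain ⟨k, hk⟩ := exists_nat_ge |Y ω|
    exact ⟨max n k, hk.trans (Nat.cast_le.2 (le_max_right n k)),
      hBmono (le_max_left n k) hn⟩
  refine ae_of_forall_ae_indicator (p := (0 ≤ ·)) hAcov fun n => ?_
  have hYi : Integrable ((A n).indicator Y) Q := by
    refine (integrable_const (n : ℝ)).mono'
      ((hY.indicator (hAm n)).mono h𝓖 le_rfl).aestronglyMeasurable (ae_of_all _ fun ω => ?_)
    by_cases hω : ω ∈ A n
    · simpa [hω] using hω.1
    · simp [hω]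
  have hfA : HasNonposCondExp Q 𝓖 ((A n).indicator f) := by
    rw [← Set.indicator_indicator]
    exact (hfB n).indicator h𝓖 (hYle n)
  exact hfA.nonneg_of_add_nonneg h𝓖 (hY.indicator (hAm n)) hYi
    (by simpa only [Set.indicator_add'] using indicator_nonneg_ae hpos (A n))

theorem HasLocallyNonposCondExp.ae_eq_zero_of_nonneg [IsFiniteMeasure Q] (h𝓖 : 𝓖 ≤ m0)
    {f : Ω → ℝ} (hf : HasLocallyNonposCondExp Q 𝓖 f) (hpos : 0 ≤ᵐ[Q] f) : f =ᵐ[Q] 0 := by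
  obtain ⟨B, -, -, hBcov, hfB⟩ := hf
  exact ae_of_forall_ae_indicator (p := (· = 0)) hBcov fun n =>
    (hfB n).ae_eq_zero_of_nonneg h𝓖 (indicator_nonneg_ae hpos (B n))

def IsGeneralizedSupermartingale (Q : Measure Ω) (F : ℕ → MeasurableSpace Ω) (T : ℕ)
    (X : ℕ → Ω → ℝ) : Prop :=
  ∀ t < T, Measurable[F t] (X t) ∧ HasLocallyNonposCondExp Q (F t) (X (t + 1) - X t)

theorem IsGeneralizedSupermartingale.ae_eq_zero_of_nonneg [IsFiniteMeasure Q]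
    {F : ℕ → MeasurableSpace Ω} (hF : ∀ t, F t ≤ m0) {T : ℕ} {X : ℕ → Ω → ℝ}
    (hX : IsGeneralizedSupermartingale Q F T X) (hX0 : X 0 =ᵐ[Q] 0) (hpos : 0 ≤ᵐ[Q] X T) :
    X T =ᵐ[Q] 0 := by
  suffices ∀ t ≤ T, 0 ≤ᵐ[Q] X t → X t =ᵐ[Q] 0 from this T le_rfl hpos
  intro t
  induction t with
  | zero => exact fun _ _ => hX0
  | succ t ih =>
    intro ht hpos
    obtain ⟨hXm, hinc⟩ := hX t ht
    have hXt : 0 ≤ᵐ[Q] X t := hinc.nonneg_of_add_nonneg (hF t) hXm (by rwa [add_sub_cancel])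
    have hXt0 := ih (by omega) hXt
    have hinc0 : X (t + 1) - X t =ᵐ[Q] 0 := hinc.ae_eq_zero_of_nonneg (hF t) <| by
      filter_upwards [hpos, hXt0] with ω h h0
      simp only [Pi.sub_apply, Pi.zero_apply, h0] at h ⊢
      linarith
    filter_upwards [hXt0, hinc0] with ω h0 h1
    simp only [Pi.sub_apply, Pi.zero_apply, h0] at h1 ⊢
    linarith

end LocalCondExp

section Gains

variable {Ω : Type*} {m0 : MeasurableSpace Ω} {Q : Measure Ω} {d : ℕ}

theorem _root_.Measurable.dotp {𝓖 : MeasurableSpace Ω} {x y : Ω → Fin d → ℝ}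
    (hx : Measurable[𝓖] x) (hy : Measurable[𝓖] y) :
    Measurable[𝓖] fun ω => dotp (x ω) (y ω) :=
  Finset.measurable_sum _ fun i _ =>
    ((measurable_pi_apply i).comp hx).mul ((measurable_pi_apply i).comp hy)

theorem hasLocallyNonposCondExp_dotp_sub_of_condExp_le [IsFiniteMeasure Q]
    {𝓖 : MeasurableSpace Ω} (h𝓖 : 𝓖 ≤ m0) {H S S' : Ω → Fin d → ℝ}
    (hH : Measurable[𝓖] H) (hH0 : ∀ ω i, 0 ≤ H ω i)
    (hS : ∀ i, Integrable (fun ω => S ω i) Q) (hS' : ∀ i, Integrable (fun ω => S' ω i) Q)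
    (hS'm : Measurable[𝓖] S') (hSS' : ∀ i, Q[fun ω => S ω i|𝓖] ≤ᵐ[Q] fun ω => S' ω i) :
    HasLocallyNonposCondExp Q 𝓖 fun ω => dotp (H ω) (S ω - S' ω) := by
  refine ⟨fun n => {ω | ‖H ω‖ ≤ n}, fun a b hab ω (hω : ‖H ω‖ ≤ a) => hω.trans (Nat.cast_le.2 hab),
    fun n => hH.norm measurableSet_Iic, fun ω => exists_nat_ge ‖H ω‖, fun n => ?_⟩
  set h : Fin d → Ω → ℝ := fun i => {ω | ‖H ω‖ ≤ n}.indicator fun ω => H ω i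
  have hsplit : {ω | ‖H ω‖ ≤ n}.indicator (fun ω => dotp (H ω) (S ω - S' ω))
      = ∑ i, h i * ((fun ω => S ω i) - fun ω => S' ω i) := by
    funext ω
    by_cases hω : ω ∈ {ω | ‖H ω‖ ≤ n}
    · simp [h, hω, dotp]
    · simp [h, hω]
  rw [hsplit]
  refine HasNonposCondExp.sum _ fun i _ => hasNonposCondExp_mul_sub h𝓖 (C := n) ?_ ?_ ?_
    (hS i) (hS' i) ((measurable_pi_apply i).comp hS'm) (hSS' i)
  · exact ((measurable_pi_apply i).comp hH).indicator (hH.norm measurableSet_Iic)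
  · exact Set.indicator_nonneg fun ω _ => hH0 ω i
  · intro ω
    by_cases hω : ω ∈ {ω | ‖H ω‖ ≤ n}
    · simpa [h, hω] using (le_abs_self _).trans ((norm_le_pi_norm (H ω) i).trans hω)
    · simp [h, hω]

theorem hasLocallyNonposCondExp_dotp_sub_of_le_condExp [IsFiniteMeasure Q]
    {𝓖 : MeasurableSpace Ω} (h𝓖 : 𝓖 ≤ m0) {H S S' : Ω → Fin d → ℝ}
    (hH : Measurable[𝓖] H) (hH0 : ∀ ω i, H ω i ≤ 0)
    (hS : ∀ i, Integrable (fun ω => S ω i) Q) (hS' : ∀ i, Integrable (fun ω => S' ω i) Q)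
    (hS'm : Measurable[𝓖] S') (hS'S : ∀ i, (fun ω => S' ω i) ≤ᵐ[Q] Q[fun ω => S ω i|𝓖]) :
    HasLocallyNonposCondExp Q 𝓖 fun ω => dotp (H ω) (S ω - S' ω) := by
  have hneg : (fun ω => dotp (H ω) (S ω - S' ω))
      = fun ω => dotp ((-H) ω) ((-S) ω - (-S') ω) := by
    funext ω
    simp only [dotp, Pi.neg_apply, Pi.sub_apply]
    exact Finset.sum_congr rfl fun i _ => by ring
  rw [hneg]
  refine hasLocallyNonposCondExp_dotp_sub_of_condExp_le h𝓖 hH.neg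
    (fun ω i => neg_nonneg.2 (hH0 ω i)) (fun i => (hS i).neg) (fun i => (hS' i).neg) hS'm.neg
    fun i => ?_
  filter_upwards [condExp_neg (μ := Q) (fun ω => S ω i) 𝓖, hS'S i] with ω hω h
  rw [show (fun ω => (-S) ω i) = -fun ω => S ω i from rfl, hω]
  exact neg_le_neg h

theorem gain_zero (S H : ℕ → Ω → Fin d → ℝ) : gain S 0 H = 0 := by
  funext ω
  simp [gain]

theorem gain_succ (S H : ℕ → Ω → Fin d → ℝ) (t : ℕ) (ω : Ω) :
    gain S (t + 1) H ω = gain S t H ω + dotp (H (t + 1) ω) (S (t + 1) ω - S t ω) := by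
  simp only [gain, Finset.sum_Icc_succ_top (Nat.le_add_left 1 t), Nat.add_sub_cancel]

theorem measurable_gain {F : ℕ → MeasurableSpace Ω} (hF : Monotone F) {T : ℕ}
    {S H : ℕ → Ω → Fin d → ℝ} (hS : AdaptedProc F T S)
    (hH : ∀ t, 1 ≤ t → t ≤ T → Measurable[F (t - 1)] (H t)) {t : ℕ} (ht : t ≤ T) :
    Measurable[F t] (gain S t H) := by
  refine Finset.measurable_sum _ fun j hj => ?_
  obtain ⟨hj1, hjt⟩ := Finset.mem_Icc.1 hj
  have hle : F (j - 1) ≤ F t := hF (by omega)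
  exact ((hH j hj1 (hjt.trans ht)).mono hle le_rfl).dotp
    (((hS j (hjt.trans ht)).mono (hF hjt) le_rfl).sub ((hS (j - 1) (by omega)).mono hle le_rfl))

theorem isGeneralizedSupermartingale_gain_add_gain [IsFiniteMeasure Q]
    {F : ℕ → MeasurableSpace Ω} (hFmono : Monotone F) (hF : ∀ t, F t ≤ m0) {T : ℕ}
    {Shat Scheck Hhat Hcheck : ℕ → Ω → Fin d → ℝ}
    (hShat : AdaptedProc F T Shat) (hScheck : AdaptedProc F T Scheck)
    (hShati : ∀ t ≤ T, ∀ i, Integrable (fun ω => Shat t ω i) Q)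
    (hSchecki : ∀ t ≤ T, ∀ i, Integrable (fun ω => Scheck t ω i) Q)
    (hsup : ∀ t < T, ∀ i, Q[fun ω => Shat (t + 1) ω i|F t] ≤ᵐ[Q] fun ω => Shat t ω i)
    (hsub : ∀ t < T, ∀ i, (fun ω => Scheck t ω i) ≤ᵐ[Q] Q[fun ω => Scheck (t + 1) ω i|F t])
    (hHhat : IsStrategy F T Hhat) (hHhat0 : NonnegStrategy T Hhat)
    (hHcheck : IsStrategy F T Hcheck) (hHcheck0 : NonposStrategy T Hcheck) :
    IsGeneralizedSupermartingale Q F T fun t ω => gain Shat t Hhat ω + gain Scheck t Hcheck ω := by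
  intro t ht
  refine ⟨(measurable_gain hFmono hShat hHhat.2 ht.le).add
    (measurable_gain hFmono hScheck hHcheck.2 ht.le), ?_⟩
  have hinc : ((fun ω => gain Shat (t + 1) Hhat ω + gain Scheck (t + 1) Hcheck ω)
      - fun ω => gain Shat t Hhat ω + gain Scheck t Hcheck ω)
      = (fun ω => dotp (Hhat (t + 1) ω) (Shat (t + 1) ω - Shat t ω))
        + fun ω => dotp (Hcheck (t + 1) ω) (Scheck (t + 1) ω - Scheck t ω) := by
    funext ω
    simp only [Pi.sub_apply, Pi.add_apply, gain_succ]
    ring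
  rw [hinc]
  exact (hasLocallyNonposCondExp_dotp_sub_of_condExp_le (hF t) (hHhat.2 (t + 1) (by omega) ht)
      (fun ω i => hHhat0 (t + 1) ht ω i) (hShati (t + 1) ht) (hShati t ht.le) (hShat t ht.le)
      (hsup t ht)).add (hF t)
    (hasLocallyNonposCondExp_dotp_sub_of_le_condExp (hF t) (hHcheck.2 (t + 1) (by omega) ht)
      (fun ω i => hHcheck0 (t + 1) ht ω i) (hSchecki (t + 1) ht) (hSchecki t ht.le)
      (hScheck t ht.le) (hsub t ht))

end Gains

section Liquidation

theorem sum_Icc_mul_sub_eq (T : ℕ) (h s : ℕ → ℝ) (h0 : h 0 = 0) :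
    ∑ j ∈ Icc 1 T, h j * (s j - s (j - 1))
      = h T * s T - ∑ j ∈ Icc 1 T, (h j - h (j - 1)) * s (j - 1) := by
  induction T with
  | zero => simp [h0]
  | succ T ih =>
    rw [Finset.sum_Icc_succ_top (by omega), Finset.sum_Icc_succ_top (by omega), ih,
      Nat.add_sub_cancel]
    ring

/-- Moving a position from `y` to `x`, the long part `max · 0` and the short part `max (-·) 0`
move in opposite directions, so the trade at bid `sb` / ask `sa` is dominated by trading the
long part at `sh` and the short part at `sc`. -/
theorem trade_cashflow_le {x y sb sh sc sa : ℝ} (hsh : sb ≤ sh ∧ sh ≤ sa)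
    (hsc : sb ≤ sc ∧ sc ≤ sa) :
    max (-(x - y)) 0 * sb - max (x - y) 0 * sa
      ≤ -((max x 0 - max y 0) * sh) + (max (-x) 0 - max (-y) 0) * sc := by
  rcases le_total 0 x with hx | hx <;> rcases le_total 0 y with hy | hy <;>
    rcases le_total y x with hxy | hxy <;>
    simp only [max_eq_left, max_eq_right, hx, hy, hxy, neg_nonneg, neg_nonpos, sub_nonneg,
      sub_nonpos, neg_sub] <;> nlinarith

theorem liquidation_le_gains (T : ℕ) {x sb sh sc sa : ℕ → ℝ} (hx0 : x 0 = 0)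
    (hs : ∀ j ≤ T, (sb j ≤ sh j ∧ sh j ≤ sa j) ∧ (sb j ≤ sc j ∧ sc j ≤ sa j)) :
    (∑ j ∈ Icc 1 T, (max (-(x j - x (j - 1))) 0 * sb (j - 1)
        - max (x j - x (j - 1)) 0 * sa (j - 1)))
        + max (x T) 0 * sb T - max (-x T) 0 * sa T
      ≤ (∑ j ∈ Icc 1 T, max (x j) 0 * (sh j - sh (j - 1)))
        + ∑ j ∈ Icc 1 T, -max (-x j) 0 * (sc j - sc (j - 1)) := by
  set p : ℕ → ℝ := fun j => max (x j) 0
  set q : ℕ → ℝ := fun j => max (-x j) 0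
  have hsteps := Finset.sum_le_sum fun j (hj : j ∈ Icc 1 T) =>
    have hj : j - 1 ≤ T := by grind
    trade_cashflow_le (x := x j) (y := x (j - 1)) (hs (j - 1) hj).1 (hs (j - 1) hj).2
  have hlast : p T * sb T - q T * sa T ≤ p T * sh T - q T * sc T :=
    sub_le_sub (mul_le_mul_of_nonneg_left (hs T le_rfl).1.1 (le_max_right _ _))
      (mul_le_mul_of_nonneg_left (hs T le_rfl).2.2 (le_max_right _ _))
  have hp := sum_Icc_mul_sub_eq T p sh (by simp [p, hx0])
  have hq := sum_Icc_mul_sub_eq T q sc (by simp [q, hx0])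
  simp only [Finset.sum_add_distrib, Finset.sum_neg_distrib, neg_mul] at hsteps ⊢
  linarith

end Liquidation

section Strategies

variable {Ω : Type*} {d T : ℕ} {F : ℕ → MeasurableSpace Ω}

theorem xval_le_gain_add_gain {Sb Sa Shat Scheck H : ℕ → Ω → Fin d → ℝ} {ω : Ω}
    (hH0 : H 0 ω = 0)
    (hs : ∀ t ≤ T, ∀ i, (Sb t ω i ≤ Shat t ω i ∧ Shat t ω i ≤ Sa t ω i) ∧
      (Sb t ω i ≤ Scheck t ω i ∧ Scheck t ω i ≤ Sa t ω i)) :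
    xval Sb Sa T H ω ≤ gain Shat T (fun t ω => posPart (H t ω)) ω
      + gain Scheck T (fun t ω => -negPart (H t ω)) ω := by
  have hcoord := Finset.sum_le_sum fun i (_ : i ∈ Finset.univ) =>
    liquidation_le_gains T (x := fun t => H t ω i) (sb := fun t => Sb t ω i)
      (sh := fun t => Shat t ω i) (sc := fun t => Scheck t ω i) (sa := fun t => Sa t ω i)
      (by simp [hH0]) fun t ht => hs t ht i
  simp only [Finset.sum_add_distrib, Finset.sum_sub_distrib] at hcoord
  simp only [xval, gain, dotp, posPart, negPart, Pi.sub_apply, Pi.neg_apply,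
    Finset.sum_sub_distrib, Finset.sum_comm (s := Icc 1 T)]
  exact hcoord

theorem IsStrategy.posPart {H : ℕ → Ω → Fin d → ℝ} (hH : IsStrategy F T H) :
    IsStrategy F T fun t ω => posPart (H t ω) := by
  refine ⟨by funext ω i; simp [hH.1, BidAskFTAP.posPart], fun t ht1 htT => ?_⟩
  exact (continuous_pi fun i => (continuous_apply i).max continuous_const).measurable.comp
    (hH.2 t ht1 htT)

theorem IsStrategy.neg_negPart {H : ℕ → Ω → Fin d → ℝ} (hH : IsStrategy F T H) :
    IsStrategy F T fun t ω => -negPart (H t ω) := by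
  refine ⟨by funext ω i; simp [hH.1, BidAskFTAP.negPart], fun t ht1 htT => ?_⟩
  exact (continuous_pi fun i => ((continuous_apply i).neg.max continuous_const).neg).measurable.comp
    (hH.2 t ht1 htT)

end Strategies

section NoArbitrage

variable {Ω : Type*} [m0 : MeasurableSpace Ω] {d T : ℕ} {F : ℕ → MeasurableSpace Ω}

/-- `R̃_T ∩ L⁰₊ = {0}`. -/
def NoGainArbitrage (P : Measure Ω) (F : ℕ → MeasurableSpace Ω) (T : ℕ)
    (Shat Scheck : ℕ → Ω → Fin d → ℝ) : Prop :=
  ∀ Hhat Hcheck : ℕ → Ω → Fin d → ℝ,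
    IsStrategy F T Hhat → NonnegStrategy T Hhat →
    IsStrategy F T Hcheck → NonposStrategy T Hcheck →
    (∀ᵐ ω ∂P, 0 ≤ gain Shat T Hhat ω + gain Scheck T Hcheck ω) →
    (fun ω => gain Shat T Hhat ω + gain Scheck T Hcheck ω) =ᵐ[P] 0

theorem ae_forall_le_le {P : Measure Ω} {Sb Sa S : ℕ → Ω → Fin d → ℝ}
    (h : ∀ t ≤ T, ∀ i, ∀ᵐ ω ∂P, Sb t ω i ≤ S t ω i ∧ S t ω i ≤ Sa t ω i) :
    ∀ᵐ ω ∂P, ∀ t ≤ T, ∀ i, Sb t ω i ≤ S t ω i ∧ S t ω i ≤ Sa t ω i :=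
  ae_all_iff.2 fun t => eventually_imp_distrib_left.2 fun ht => ae_all_iff.2 (h t ht)

theorem noArbitrage_of_noGainArbitrage {P : Measure Ω} {Sb Sa Shat Scheck : ℕ → Ω → Fin d → ℝ}
    (hgain : NoGainArbitrage P F T Shat Scheck)
    (hShat : ∀ t ≤ T, ∀ i, ∀ᵐ ω ∂P, Sb t ω i ≤ Shat t ω i ∧ Shat t ω i ≤ Sa t ω i)
    (hScheck : ∀ t ≤ T, ∀ i, ∀ᵐ ω ∂P, Sb t ω i ≤ Scheck t ω i ∧ Scheck t ω i ≤ Sa t ω i) :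
    NA P F Sb Sa T := by
  rintro f ⟨H, hH, r, -, hr, hf⟩ hf0
  have hle : ∀ᵐ ω ∂P, xval Sb Sa T H ω ≤ gain Shat T (fun t ω => posPart (H t ω)) ω
      + gain Scheck T (fun t ω => -negPart (H t ω)) ω := by
    filter_upwards [ae_forall_le_le hShat, ae_forall_le_le hScheck] with ω hhat hcheck
    exact xval_le_gain_add_gain (by rw [hH.1]; rfl) fun t ht i => ⟨hhat t ht i, hcheck t ht i⟩
  have hzero := hgain _ _ hH.posPart (fun _ _ _ _ => le_max_right _ _) hH.neg_negPart
    (fun _ _ _ _ => neg_nonpos.2 (le_max_right _ _)) <| by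
      filter_upwards [hle, hf, hf0, hr] with ω h1 h2 h3 h4
      rw [h2] at h3
      linarith
  filter_upwards [hzero, hle, hf, hf0, hr] with ω h1 h2 h3 h4 h5
  simp only [Pi.zero_apply] at h1 h4 ⊢
  rw [h3] at h4 ⊢
  linarith

end NoArbitrage

section ConsistentPriceSystems

variable {Ω : Type*} [m0 : MeasurableSpace Ω] {d T : ℕ} {F : ℕ → MeasurableSpace Ω}
  {P Q : Measure Ω} {Sb Sa Shat Scheck : ℕ → Ω → Fin d → ℝ}

theorem noGainArbitrage_of_supCPS_subCPS (hF : IsFiltration F T)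
    (hsup : IsSupCPS P F T Sb Sa Shat Q) (hsub : IsSubCPS P F T Sb Sa Scheck Q) :
    NoGainArbitrage P F T Shat Scheck := by
  obtain ⟨hQ, ⟨hPQ, hQP⟩, hShat, hShati, -, hShatsup⟩ := hsup
  obtain ⟨-, -, hScheck, hSchecki, -, hSchecksub⟩ := hsub
  intro Hhat Hcheck hHhat hHhat0 hHcheck hHcheck0 hpos
  have hX := isGeneralizedSupermartingale_gain_add_gain hF.1 hF.2.1 hShat hScheck hShati hSchecki
    (fun t ht i => .filter_mono hQP.ae_le (by simpa using hShatsup (t + 1) (by omega) ht i))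
    (fun t ht i => .filter_mono hQP.ae_le (by simpa using hSchecksub (t + 1) (by omega) ht i))
    hHhat hHhat0 hHcheck hHcheck0
  exact hPQ.ae_le (hX.ae_eq_zero_of_nonneg hF.2.1 (by simp [gain_zero]; rfl) (hQP.ae_le hpos))

end ConsistentPriceSystems

end BidAskFTAP

open BidAskFTAP in
theorem stmt0_general {Ω : Type*} [m : MeasurableSpace Ω] {d T : ℕ}
    (P : MeasureTheory.Measure Ω)
    (F : ℕ → MeasurableSpace Ω) (hF : IsFiltration F T)
    (Sb Sa : ℕ → Ω → Fin d → ℝ)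
    (Q : MeasureTheory.Measure Ω) (Shat Scheck : ℕ → Ω → Fin d → ℝ)
    (hsup : IsSupCPS P F T Sb Sa Shat Q) (hsub : IsSubCPS P F T Sb Sa Scheck Q) :
    (∀ Hhat Hcheck : ℕ → Ω → Fin d → ℝ,
      IsStrategy F T Hhat → NonnegStrategy T Hhat →
      IsStrategy F T Hcheck → NonposStrategy T Hcheck →
      (∀ᵐ ω ∂P, 0 ≤ gain Shat T Hhat ω + gain Scheck T Hcheck ω) →
      (fun ω => gain Shat T Hhat ω + gain Scheck T Hcheck ω) =ᵐ[P] 0) ∧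
    NA P F Sb Sa T :=
  have hgain := noGainArbitrage_of_supCPS_subCPS hF hsup hsub
  ⟨hgain, noArbitrage_of_noGainArbitrage hgain hsup.2.2.2.2.1 hsub.2.2.2.2.1⟩

open BidAskFTAP in
/-- If there exist a supermartingale consistent price system `(Ŝ, Q)` and a
submartingale consistent price system `(Š, Q)` under the same measure `Q`, then
`R̃_T ∩ L⁰₊ = {0}` and the market satisfies no arbitrage, `𝒜_T ∩ L⁰₊ = {0}`. -/
theorem stmt0 {Ω : Type*} [m : MeasurableSpace Ω] {d T : ℕ} (hT : 1 ≤ T)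
    (P : MeasureTheory.Measure Ω) [MeasureTheory.IsProbabilityMeasure P]
    (hcomp : P.IsComplete)
    (F : ℕ → MeasurableSpace Ω) (hF : IsFiltration F T)
    (Sb Sa : ℕ → Ω → Fin d → ℝ) (hBA : IsBidAsk P F T Sb Sa)
    (Q : MeasureTheory.Measure Ω) (Shat Scheck : ℕ → Ω → Fin d → ℝ)
    (hsup : IsSupCPS P F T Sb Sa Shat Q) (hsub : IsSubCPS P F T Sb Sa Scheck Q) :
    (∀ Hhat Hcheck : ℕ → Ω → Fin d → ℝ,
      IsStrategy F T Hhat → NonnegStrategy T Hhat →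
      IsStrategy F T Hcheck → NonposStrategy T Hcheck →
      (∀ᵐ ω ∂P, 0 ≤ gain Shat T Hhat ω + gain Scheck T Hcheck ω) →
      (fun ω => gain Shat T Hhat ω + gain Scheck T Hcheck ω) =ᵐ[P] 0) ∧
    NA P F Sb Sa T :=
  stmt0_general (m := m) P F hF Sb Sa Q Shat Scheck hsup hsub
end
end

section
/- If the no-arbitrage condition 𝒜_T ∩ L^0_+ = {0} holds for the time horizon T, then there is no arbitrage in the market with any time horizon 1 ≤ t ≤ T, i.e. 𝒜_t ∩ L^0_+(𝓕_t) = {0} for every t = 1, …, T. -/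
open MeasureTheory Filter Finset
open scoped ENNReal NNReal

noncomputable section

/-!
A strategy on the horizon `t` becomes one on the horizon `T ≥ t` by closing the position at
time `t + 1` and staying flat afterwards. Closing at `t + 1` trades at the time-`t` bid and ask
prices, exactly as the liquidation term of `x_t` does, so the extended strategy has the same value
`x_T = x_t`; hence `𝒜_t ⊆ 𝒜_T` and no arbitrage up to `T` rules out arbitrage up to `t`.
-/

namespace BidAskFTAP

variable {Ω : Type*} {d : ℕ}

lemma posPart_zero_sub (x : Fin d → ℝ) : posPart (0 - x) = negPart x := by
  funext i; simp [posPart, negPart]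

lemma negPart_zero_sub (x : Fin d → ℝ) : negPart (0 - x) = posPart x := by
  funext i; simp [posPart, negPart]

@[simp] lemma posPart_zero : posPart (0 : Fin d → ℝ) = 0 := by
  funext i; simp [posPart]

@[simp] lemma negPart_zero : negPart (0 : Fin d → ℝ) = 0 := by
  funext i; simp [negPart]

@[simp] lemma dotp_zero_left (y : Fin d → ℝ) : dotp 0 y = 0 := by
  simp [dotp]

section Value

variable (Sb Sa : ℕ → Ω → Fin d → ℝ)

lemma xval_congr {T : ℕ} {H H' : ℕ → Ω → Fin d → ℝ} (h : ∀ j ≤ T, H j = H' j) :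
    xval Sb Sa T H = xval Sb Sa T H' := by
  funext ω
  simp only [xval, h T le_rfl]
  congr 2
  refine sum_congr rfl fun j hj => ?_
  have hjT := (mem_Icc.1 hj).2
  rw [h j hjT, h (j - 1) (by omega)]

lemma xval_succ_of_eq_zero {T : ℕ} {H : ℕ → Ω → Fin d → ℝ} (hH : H (T + 1) = 0) :
    xval Sb Sa (T + 1) H = xval Sb Sa T H := by
  funext ω
  simp only [xval, hH, sum_Icc_succ_top (Nat.le_add_left 1 T), Nat.add_sub_cancel, Pi.zero_apply,
    posPart_zero_sub, negPart_zero_sub, posPart_zero, negPart_zero, dotp_zero_left]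
  ring

def liquidateAfter (t : ℕ) (H : ℕ → Ω → Fin d → ℝ) : ℕ → Ω → Fin d → ℝ :=
  fun j => if j ≤ t then H j else 0

lemma xval_liquidateAfter {t T : ℕ} (htT : t ≤ T) (H : ℕ → Ω → Fin d → ℝ) :
    xval Sb Sa T (liquidateAfter t H) = xval Sb Sa t H := by
  induction T, htT using Nat.le_induction with
  | base => exact xval_congr Sb Sa fun j hj => if_pos hj
  | succ T htT ih =>
    rw [xval_succ_of_eq_zero Sb Sa (if_neg (by omega)), ih]

end Value

section Market

variable {F : ℕ → MeasurableSpace Ω}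

lemma IsStrategy.liquidateAfter {t T : ℕ} {H : ℕ → Ω → Fin d → ℝ} (hH : IsStrategy F t H) :
    IsStrategy F T (liquidateAfter t H) := by
  refine ⟨if_pos (Nat.zero_le t) |>.trans hH.1, fun s hs _ => ?_⟩
  by_cases hst : s ≤ t
  · simpa only [BidAskFTAP.liquidateAfter, if_pos hst] using hH.2 s hs hst
  · simp only [BidAskFTAP.liquidateAfter, if_neg hst]
    exact measurable_const

variable [MeasurableSpace Ω] {P : Measure Ω} {Sb Sa : ℕ → Ω → Fin d → ℝ}

lemma memA_mono (hF : Monotone F) {t T : ℕ} (htT : t ≤ T) {f : Ω → ℝ}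
    (hf : memA P F Sb Sa t f) : memA P F Sb Sa T f := by
  obtain ⟨H, hH, r, hr, hr_nonneg, hf_eq⟩ := hf
  exact ⟨liquidateAfter t H, hH.liquidateAfter, r, hr.mono (hF htT) le_rfl, hr_nonneg,
    by rwa [xval_liquidateAfter Sb Sa htT]⟩

lemma NA.of_le (hF : Monotone F) {t T : ℕ} (htT : t ≤ T) (hNA : NA P F Sb Sa T) :
    NA P F Sb Sa t :=
  fun f hf hf_nonneg => hNA f (memA_mono hF htT hf) hf_nonneg

end Market

end BidAskFTAP

open BidAskFTAP in
theorem stmt2_general {Ω : Type*} [m : MeasurableSpace Ω] {d T : ℕ}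
    (P : MeasureTheory.Measure Ω)
    (F : ℕ → MeasurableSpace Ω) (hF : IsFiltration F T)
    (Sb Sa : ℕ → Ω → Fin d → ℝ)
    (hNA : NA P F Sb Sa T) :
    ∀ t, 1 ≤ t → t ≤ T → NA P F Sb Sa t :=
  fun _ _ htT => hNA.of_le hF.1 htT

open BidAskFTAP in
/-- If the no-arbitrage condition `𝒜_T ∩ L⁰₊ = {0}` holds for horizon `T`,
then `𝒜_t ∩ L⁰₊(𝓕_t) = {0}` for every `1 ≤ t ≤ T`. -/
theorem stmt2 {Ω : Type*} [m : MeasurableSpace Ω] {d T : ℕ} (hT : 1 ≤ T)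
    (P : MeasureTheory.Measure Ω) [MeasureTheory.IsProbabilityMeasure P]
    (hcomp : P.IsComplete)
    (F : ℕ → MeasurableSpace Ω) (hF : IsFiltration F T)
    (Sb Sa : ℕ → Ω → Fin d → ℝ) (hBA : IsBidAsk P F T Sb Sa)
    (hNA : NA P F Sb Sa T) :
    ∀ t, 1 ≤ t → t ≤ T → NA P F Sb Sa t :=
  stmt2_general (m := m) P F hF Sb Sa hNA
end
end

section
/- For every t = 1, …, T the inclusion F_t ⊆ 𝒜_t holds, i.e. every element of F_t can be written as x_t(H) minus an a.s. nonnegative 𝓕_t-measurable random variable for some strategy H ∈ 𝒫_t. -/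
open MeasureTheory Filter Finset
open scoped ENNReal NNReal

noncomputable section

/-! Write the element of `F_t` as round trips: `Hp j` is bought at the ask at time `j` and sold
at the bid at `t`, `Hm j` is sold at the bid at `j` and bought back at the ask at `t`. Instead,
hold the net position `∑_{j<s} (Hp j - Hm j)`: at every date only the difference of what is
bought and what is sold is traded, which, since bid ≤ ask, never does worse. Hence the
liquidation value `x_t` of the net strategy dominates the round-trip gain, and the surplus is a
nonnegative `𝓕_t`-measurable variable that joins the `L⁰₊` part. -/

namespace BidAskFTAP

section Algebra

variable {d : ℕ}

theorem dotp_eq_dotProduct (x y : Fin d → ℝ) : dotp x y = x ⬝ᵥ y := rfl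

theorem negPart_sub (a b : Fin d → ℝ) : negPart (a - b) = posPart (b - a) := by
  ext i
  simp [negPart, posPart]

theorem posPart_sub (a b : Fin d → ℝ) : posPart (a - b) = negPart (b - a) := by
  rw [negPart_sub]

theorem dotp_sub_dotp_le_posPart_sub_negPart {a b sb sa : Fin d → ℝ} (ha : 0 ≤ a)
    (hb : 0 ≤ b) (hs : sb ≤ sa) :
    dotp a sb - dotp b sa ≤ dotp (posPart (a - b)) sb - dotp (negPart (a - b)) sa := by
  simp only [dotp, posPart, negPart, ← Finset.sum_sub_distrib]
  refine Finset.sum_le_sum fun i _ => ?_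
  have ha' : 0 ≤ a i := ha i
  have hb' : 0 ≤ b i := hb i
  have hs' : sb i ≤ sa i := hs i
  simp only [Pi.sub_apply, neg_sub]
  rcases le_total (a i) (b i) with h | h
  · rw [max_eq_right (sub_nonpos.2 h), max_eq_left (sub_nonneg.2 h)]; nlinarith
  · rw [max_eq_left (sub_nonneg.2 h), max_eq_right (sub_nonpos.2 h)]; nlinarith

theorem dotp_sub_dotp_le_negPart_sub_posPart {a b sb sa : Fin d → ℝ} (ha : 0 ≤ a)
    (hb : 0 ≤ b) (hs : sb ≤ sa) :
    dotp b sb - dotp a sa ≤ dotp (negPart (a - b)) sb - dotp (posPart (a - b)) sa := by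
  rw [negPart_sub a b, posPart_sub a b]
  exact dotp_sub_dotp_le_posPart_sub_negPart hb ha hs

end Algebra

section Measurability

variable {Ω : Type*} {mΩ : MeasurableSpace Ω} {d : ℕ}

theorem measurable_dotp {f g : Ω → Fin d → ℝ} (hf : Measurable f) (hg : Measurable g) :
    Measurable fun ω => dotp (f ω) (g ω) :=
  Finset.measurable_sum _ fun i _ =>
    ((measurable_pi_apply i).comp hf).mul ((measurable_pi_apply i).comp hg)

theorem measurable_posPart {f : Ω → Fin d → ℝ} (hf : Measurable f) :
    Measurable fun ω => posPart (f ω) :=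
  measurable_pi_lambda _ fun i => ((measurable_pi_apply i).comp hf).max measurable_const

theorem measurable_negPart {f : Ω → Fin d → ℝ} (hf : Measurable f) :
    Measurable fun ω => negPart (f ω) :=
  measurable_pi_lambda _ fun i => ((measurable_pi_apply i).comp hf).neg.max measurable_const

end Measurability

section Market

variable {Ω : Type*} {d : ℕ}

def netPosition (Hp Hm : ℕ → Ω → Fin d → ℝ) (s : ℕ) (ω : Ω) : Fin d → ℝ :=
  ∑ j ∈ range s, (Hp j ω - Hm j ω)

def roundTripGain (Sb Sa Hp Hm : ℕ → Ω → Fin d → ℝ) (t : ℕ) (ω : Ω) : ℝ :=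
  ∑ j ∈ range t, (dotp (Hp j ω) (Sb t ω - Sa j ω) - dotp (Hm j ω) (Sa t ω - Sb j ω))

theorem xval_netPosition (Sb Sa Hp Hm : ℕ → Ω → Fin d → ℝ) (t : ℕ) (ω : Ω) :
    xval Sb Sa t (netPosition Hp Hm) ω =
      ∑ j ∈ range t, (dotp (negPart (Hp j ω - Hm j ω)) (Sb j ω)
          - dotp (posPart (Hp j ω - Hm j ω)) (Sa j ω))
        + (dotp (posPart (∑ j ∈ range t, Hp j ω - ∑ j ∈ range t, Hm j ω)) (Sb t ω)
          - dotp (negPart (∑ j ∈ range t, Hp j ω - ∑ j ∈ range t, Hm j ω)) (Sa t ω)) := by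
  have hstep : ∀ j, netPosition Hp Hm (j + 1) ω - netPosition Hp Hm j ω = Hp j ω - Hm j ω :=
    fun j => by rw [netPosition, netPosition, sum_range_succ, add_sub_cancel_left]
  have hfinal : netPosition Hp Hm t ω = ∑ j ∈ range t, Hp j ω - ∑ j ∈ range t, Hm j ω := by
    simp [netPosition, sum_sub_distrib]
  rw [xval, ← Ico_add_one_right_eq_Icc, sum_Ico_eq_sum_range, Nat.add_sub_cancel]
  simp only [add_comm 1, Nat.add_sub_cancel, hstep, hfinal]
  ring

theorem roundTripGain_le_xval_netPosition {Sb Sa Hp Hm : ℕ → Ω → Fin d → ℝ} {t : ℕ} {ω : Ω}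
    (hbid : ∀ j ≤ t, Sb j ω ≤ Sa j ω) (hnn : ∀ j < t, ∀ i, 0 ≤ Hp j ω i ∧ 0 ≤ Hm j ω i) :
    roundTripGain Sb Sa Hp Hm t ω ≤ xval Sb Sa t (netPosition Hp Hm) ω := by
  have hHp : ∀ j ∈ range t, 0 ≤ Hp j ω := fun j hj i => (hnn j (mem_range.1 hj) i).1
  have hHm : ∀ j ∈ range t, 0 ≤ Hm j ω := fun j hj i => (hnn j (mem_range.1 hj) i).2
  rw [roundTripGain, xval_netPosition]
  calc _ = ∑ j ∈ range t, (dotp (Hm j ω) (Sb j ω) - dotp (Hp j ω) (Sa j ω))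
        + (dotp (∑ j ∈ range t, Hp j ω) (Sb t ω) - dotp (∑ j ∈ range t, Hm j ω) (Sa t ω)) := by
        simp only [dotp_eq_dotProduct, dotProduct_sub, sum_dotProduct, sum_sub_distrib]
        ring
    _ ≤ _ := by
      refine add_le_add (sum_le_sum fun j hj => ?_) ?_
      · exact dotp_sub_dotp_le_negPart_sub_posPart (hHp j hj) (hHm j hj)
          (hbid j (mem_range.1 hj).le)
      · exact dotp_sub_dotp_le_posPart_sub_negPart (sum_nonneg hHp) (sum_nonneg hHm)
          (hbid t le_rfl)

variable {F : ℕ → MeasurableSpace Ω} {t : ℕ}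

theorem AdaptedProc.measurable_of_le (hF : Monotone F) {S : ℕ → Ω → Fin d → ℝ}
    (hS : AdaptedProc F t S) {s : ℕ} (hs : s ≤ t) : Measurable[F t] (S s) :=
  (hS s hs).mono (hF hs) le_rfl

theorem IsStrategy.measurable_of_le (hF : Monotone F) {H : ℕ → Ω → Fin d → ℝ}
    (hH : IsStrategy F t H) {s : ℕ} (hs : s ≤ t) : Measurable[F t] (H s) := by
  rcases Nat.eq_zero_or_pos s with rfl | hs0
  · rw [hH.1]; exact measurable_const
  · exact (hH.2 s hs0 hs).mono (hF (by omega)) le_rfl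

theorem isStrategy_netPosition (hF : Monotone F) {Hp Hm : ℕ → Ω → Fin d → ℝ}
    (hmeas : ∀ j < t, Measurable[F j] (Hp j) ∧ Measurable[F j] (Hm j)) :
    IsStrategy F t (netPosition Hp Hm) := by
  refine ⟨by ext; simp [netPosition], fun s _ hst => ?_⟩
  refine Finset.measurable_sum _ fun j hj => ?_
  have hjs : j ≤ s - 1 := by rw [mem_range] at hj; omega
  exact ((hmeas j (by omega)).1.sub (hmeas j (by omega)).2).mono (hF hjs) le_rfl

theorem measurable_xval (hF : Monotone F) {Sb Sa : ℕ → Ω → Fin d → ℝ}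
    (hSb : AdaptedProc F t Sb) (hSa : AdaptedProc F t Sa) {H : ℕ → Ω → Fin d → ℝ}
    (hH : IsStrategy F t H) : Measurable[F t] (xval Sb Sa t H) := by
  refine ((Finset.measurable_sum _ fun j hj => ?_).add ?_).sub ?_
  · have hjt : j ≤ t := (mem_Icc.1 hj).2
    have hj : j - 1 ≤ t := by omega
    have hΔ : Measurable[F t] fun ω => H j ω - H (j - 1) ω :=
      (hH.measurable_of_le hF hjt).sub (hH.measurable_of_le hF hj)
    exact (measurable_dotp (measurable_negPart hΔ) (hSb.measurable_of_le hF hj)).sub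
      (measurable_dotp (measurable_posPart hΔ) (hSa.measurable_of_le hF hj))
  · exact measurable_dotp (measurable_posPart (hH.measurable_of_le hF le_rfl)) (hSb t le_rfl)
  · exact measurable_dotp (measurable_negPart (hH.measurable_of_le hF le_rfl)) (hSa t le_rfl)

theorem measurable_roundTripGain (hF : Monotone F) {Sb Sa : ℕ → Ω → Fin d → ℝ}
    (hSb : AdaptedProc F t Sb) (hSa : AdaptedProc F t Sa) {Hp Hm : ℕ → Ω → Fin d → ℝ}
    (hmeas : ∀ j < t, Measurable[F j] (Hp j) ∧ Measurable[F j] (Hm j)) :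
    Measurable[F t] (roundTripGain Sb Sa Hp Hm t) := by
  refine Finset.measurable_sum _ fun j hj => ?_
  have hjt : j < t := mem_range.1 hj
  have hHp := (hmeas j hjt).1.mono (hF hjt.le) le_rfl
  have hHm := (hmeas j hjt).2.mono (hF hjt.le) le_rfl
  exact (measurable_dotp hHp ((hSb t le_rfl).sub (hSa.measurable_of_le hF hjt.le))).sub
    (measurable_dotp hHm ((hSa t le_rfl).sub (hSb.measurable_of_le hF hjt.le)))

theorem IsBidAsk.ae_bid_le_ask {mΩ : MeasurableSpace Ω} {T : ℕ} {P : Measure Ω}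
    {Sb Sa : ℕ → Ω → Fin d → ℝ} (h : IsBidAsk P F T Sb Sa) :
    ∀ᵐ ω ∂P, ∀ j ≤ T, Sb j ω ≤ Sa j ω :=
  ae_all_iff.2 fun j => eventually_imp_distrib_left.2 fun hj => ae_all_iff.2 (h.2.2.2.2 j hj)

end Market

end BidAskFTAP

open BidAskFTAP in
theorem stmt4_general {Ω : Type*} [m : MeasurableSpace Ω] {d T : ℕ}
    (P : MeasureTheory.Measure Ω)
    (F : ℕ → MeasurableSpace Ω) (hF : IsFiltration F T)
    (Sb Sa : ℕ → Ω → Fin d → ℝ) (hBA : IsBidAsk P F T Sb Sa) :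
    ∀ t, 1 ≤ t → t ≤ T → ∀ f : Ω → ℝ, memFt P F Sb Sa t f → memA P F Sb Sa t f := by
  intro t _ htT f ⟨Hp, Hm, r, hmeas, hnn, hr, hr0, hf⟩
  have hSb : AdaptedProc F t Sb := fun s hs => hBA.1 s (hs.trans htT)
  have hSa : AdaptedProc F t Sa := fun s hs => hBA.2.1 s (hs.trans htT)
  have hH := isStrategy_netPosition hF.1 hmeas
  refine ⟨netPosition Hp Hm, hH,
    fun ω => r ω + (xval Sb Sa t (netPosition Hp Hm) ω - roundTripGain Sb Sa Hp Hm t ω),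
    hr.add ((measurable_xval hF.1 hSb hSa hH).sub (measurable_roundTripGain hF.1 hSb hSa hmeas)),
    ?_, ?_⟩
  · filter_upwards [hr0, hBA.ae_bid_le_ask] with ω hrω hbid
    have := roundTripGain_le_xval_netPosition (fun j hj => hbid j (hj.trans htT))
      (fun j hj => hnn j hj ω)
    linarith
  · filter_upwards [hf] with ω hω
    rw [hω, roundTripGain]
    ring

open BidAskFTAP in
/-- For every `t = 1, …, T` the inclusion `F_t ⊆ 𝒜_t` holds: every element
of `F_t` can be written as `x_t(H) - r` with `H ∈ 𝒫_t` a strategy and `r ∈ L⁰₊(𝓕_t)`. -/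
theorem stmt4 {Ω : Type*} [m : MeasurableSpace Ω] {d T : ℕ} (hT : 1 ≤ T)
    (P : MeasureTheory.Measure Ω) [MeasureTheory.IsProbabilityMeasure P]
    (hcomp : P.IsComplete)
    (F : ℕ → MeasurableSpace Ω) (hF : IsFiltration F T)
    (Sb Sa : ℕ → Ω → Fin d → ℝ) (hBA : IsBidAsk P F T Sb Sa) :
    ∀ t, 1 ≤ t → t ≤ T → ∀ f : Ω → ℝ, memFt P F Sb Sa t f → memA P F Sb Sa t f :=
  stmt4_general (m := m) P F hF Sb Sa hBA
end
end
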